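/- arXiv:1807.04719 — 2 statements merged into one kernel-verified Lean document; each statement's English description precedes it below -/
import Mathlib

section
/- There exist positive constants c, C and K such that for every n ≥ 2, for G ~ G(n, λ/n), the probability that G has a connected component whose number of vertices lies in the interval [C·log n, c·n] is at most K·n^{−100}. -/
open MeasureTheory Real
open scoped ENNReal Classical

noncomputable instance {n : ℕ} : MeasurableSpace (SimpleGraph (Fin n)) := ⊤

/-- The simple graph determined by an edge-indicator configuration on unordered pairs. -/
def confGraph (n : ℕ) (ω : Sym2 (Fin n) → Bool) : SimpleGraph (Fin n) where
  Adj x y := x ≠ y ∧ ω s(x, y) = true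
  symm := ⟨fun x y h => ⟨h.1.symm, by rw [Sym2.eq_swap]; exact h.2⟩⟩
  loopless := ⟨fun x h => h.1 rfl⟩

/-- The law of the Erdős–Rényi random graph `G(n,p)`: the pushforward, under the map sending
an edge-indicator configuration to the corresponding simple graph, of the product of
Bernoulli(p) measures. -/
noncomputable def erMeasure (n : ℕ) (p : ℝ) : Measure (SimpleGraph (Fin n)) :=
  Measure.map (confGraph n)
    (Measure.pi fun _ : Sym2 (Fin n) =>
      (PMF.bernoulli (min (Real.toNNReal p) 1) (min_le_right _ _)).toMeasure)

/-!
A component of size `k` contains a spanning tree, encoded by a root `v` and a parent map sending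
every other vertex of the component one step closer to `v`, and no edge leaves the component.
A union bound over roots, vertex sets and parent maps bounds the probability by
`n ∑ₖ C(n,k) k^(k-1) p^(k-1) (1-p)^(k(n-k))`. For `p = λ/n` and `k ≤ c n` the `k`-th term is at
most `n e^(-δk)` with `δ = (λ - 1 - log λ)/2 > 0`, which is at most `n⁻¹⁰²` once `k ≥ C log n`.
-/

open Finset
open scoped NNReal Nat

lemma SimpleGraph.Reachable.exists_adj_dist_lt {V : Type*} {G : SimpleGraph V} {x v : V}
    (h : G.Reachable x v) (hne : x ≠ v) : ∃ u, G.Adj x u ∧ G.dist u v < G.dist x v := by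
  obtain ⟨p, hp⟩ := h.exists_walk_length_eq_dist
  cases p with
  | nil => exact absurd rfl hne
  | cons hadj p =>
    refine ⟨_, hadj, ?_⟩
    have := G.dist_le p
    rw [SimpleGraph.Walk.length_cons] at hp
    omega

section EdgeEvents

variable {ι : Type*} [Fintype ι] [DecidableEq ι] (q : ℝ≥0) (hq : q ≤ 1)

def edgeEvent (T E : Finset ι) : Set (ι → Bool) :=
  {ω | (∀ e ∈ T, ω e = true) ∧ ∀ e ∈ E, ω e = false}

lemma measure_pi_bernoulli_edgeEvent {T E : Finset ι} (hTE : Disjoint T E) :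
    Measure.pi (fun _ : ι => (PMF.bernoulli q hq).toMeasure) (edgeEvent T E) =
      (q : ℝ≥0∞) ^ #T * (1 - (q : ℝ≥0∞)) ^ #E := by
  have hpi : edgeEvent T E = Set.univ.pi fun e =>
      if e ∈ T then {true} else if e ∈ E then {false} else Set.univ := by
    ext ω
    simp only [edgeEvent, Set.mem_setOf_eq, Set.mem_pi, Set.mem_univ, true_implies]
    refine ⟨fun ⟨hT, hE⟩ e => ?_, fun h => ⟨fun e he => ?_, fun e he => ?_⟩⟩
    · split_ifs with he he' <;> simp [*]
    · simpa [he] using h e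
    · simpa [he, disjoint_right.mp hTE he] using h e
  have hfactor : ∀ e, (PMF.bernoulli q hq).toMeasure
      (if e ∈ T then {true} else if e ∈ E then {false} else Set.univ) =
      (if e ∈ T then (q : ℝ≥0∞) else 1) * (if e ∈ E then 1 - (q : ℝ≥0∞) else 1) := by
    intro e
    by_cases heT : e ∈ T
    · simp [heT, disjoint_left.mp hTE heT, PMF.bernoulli_apply]
    by_cases heE : e ∈ E
    · simp [heT, heE, PMF.bernoulli_apply, ENNReal.coe_sub]
    · simp only [heT, heE, if_false, mul_one]
      exact measure_univ
  rw [hpi, Measure.pi_pi]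
  simp only [hfactor, prod_mul_distrib, prod_ite_mem, univ_inter, prod_const]

end EdgeEvents

section ParentMap

variable {V : Type*} [DecidableEq V]

def parentMaps (S : Finset V) (v : V) : Finset (S.erase v → S) :=
  univ.filter fun f => Function.Injective fun x => s(x.1, (f x).1)

def treeEdges {S : Finset V} {v : V} (f : S.erase v → S) : Finset (Sym2 V) :=
  univ.image fun x => s(x.1, (f x).1)

lemma card_parentMaps_le {S : Finset V} {v : V} (hv : v ∈ S) :
    #(parentMaps S v) ≤ #S ^ (#S - 1) :=
  (card_filter_le _ _).trans_eq <| by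
    rw [card_univ, Fintype.card_fun, Fintype.card_coe, Fintype.card_coe, card_erase_of_mem hv]

lemma card_treeEdges {S : Finset V} {v : V} {f : S.erase v → S} (hv : v ∈ S)
    (hf : f ∈ parentMaps S v) : #(treeEdges f) = #S - 1 := by
  rw [treeEdges, card_image_of_injective _ (mem_filter.mp hf).2, card_univ, Fintype.card_coe,
    card_erase_of_mem hv]

/-- Pointing every vertex one step closer to the root along a shortest path gives a parent map;
its edges are distinct because the distance to the root strictly decreases along each. -/
lemma SimpleGraph.exists_mem_parentMaps_adj (G : SimpleGraph V) {S : Finset V} {v : V}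
    (hS : ∀ x, x ∈ S ↔ G.Reachable v x) :
    ∃ f ∈ parentMaps S v, ∀ x : S.erase v, G.Adj x (f x) := by
  have step : ∀ x : S.erase v, ∃ u : S, G.Adj x u ∧ G.dist u v < G.dist x v := by
    rintro ⟨x, hx⟩
    obtain ⟨hxv, hxS⟩ := mem_erase.mp hx
    obtain ⟨u, hxu, hu⟩ := ((hS x).mp hxS).symm.exists_adj_dist_lt hxv
    exact ⟨⟨u, (hS u).mpr (((hS x).mp hxS).trans hxu.reachable)⟩, hxu, hu⟩
  choose f hadj hdist using step
  refine ⟨f, mem_filter.mpr ⟨mem_univ _, fun x y hxy => ?_⟩, hadj⟩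
  rcases Sym2.eq_iff.mp hxy with ⟨h, -⟩ | ⟨h₁, h₂⟩
  · exact Subtype.ext h
  · have hx := hdist x
    have hy := hdist y
    rw [h₂] at hx
    rw [← h₁] at hy
    exact absurd (hx.trans hy) (lt_irrefl _)

variable [Fintype V]

def edgeBoundary (S : Finset V) : Finset (Sym2 V) :=
  (S ×ˢ Sᶜ).image fun xy => s(xy.1, xy.2)

lemma mem_edgeBoundary {S : Finset V} {e : Sym2 V} :
    e ∈ edgeBoundary S ↔ ∃ x ∈ S, ∃ y ∉ S, s(x, y) = e := by
  simp only [edgeBoundary, mem_image, mem_product, mem_compl, Prod.exists]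
  constructor
  · rintro ⟨x, y, ⟨hx, hy⟩, rfl⟩
    exact ⟨x, hx, y, hy, rfl⟩
  · rintro ⟨x, hx, y, hy, rfl⟩
    exact ⟨x, y, ⟨hx, hy⟩, rfl⟩

lemma card_edgeBoundary (S : Finset V) :
    #(edgeBoundary S) = #S * (Fintype.card V - #S) := by
  rw [edgeBoundary, card_image_of_injOn, card_product, card_compl]
  rintro ⟨x, y⟩ hxy ⟨x', y'⟩ hxy' h
  simp only [coe_product, Set.mem_prod, mem_coe, mem_compl] at hxy hxy'
  rcases Sym2.eq_iff.mp h with ⟨rfl, rfl⟩ | ⟨rfl, rfl⟩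
  · rfl
  · exact absurd hxy.1 hxy'.2

lemma disjoint_treeEdges_edgeBoundary {S : Finset V} {v : V} (f : S.erase v → S) :
    Disjoint (treeEdges f) (edgeBoundary S) := by
  refine disjoint_left.mpr fun e he he' => ?_
  obtain ⟨x, -, rfl⟩ := mem_image.mp he
  obtain ⟨a, -, b, hb, hab⟩ := mem_edgeBoundary.mp he'
  rcases Sym2.eq_iff.mp hab with ⟨-, h⟩ | ⟨-, h⟩
  · exact hb (h ▸ (f x).2)
  · exact hb (h ▸ mem_of_mem_erase x.2)

lemma measure_biUnion_parentMaps_le (q : ℝ≥0) (hq : q ≤ 1) {S : Finset V} {v : V} (hv : v ∈ S) :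
    Measure.pi (fun _ : Sym2 V => (PMF.bernoulli q hq).toMeasure)
        (⋃ f ∈ parentMaps S v, edgeEvent (treeEdges f) (edgeBoundary S)) ≤
      ((#S ^ (#S - 1) : ℕ) : ℝ≥0∞) *
        ((q : ℝ≥0∞) ^ (#S - 1) * (1 - (q : ℝ≥0∞)) ^ (#S * (Fintype.card V - #S))) := by
  refine (measure_biUnion_finset_le _ _).trans ?_
  calc _ = ∑ _f ∈ parentMaps S v,
        (q : ℝ≥0∞) ^ (#S - 1) * (1 - (q : ℝ≥0∞)) ^ (#S * (Fintype.card V - #S)) := by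
        refine sum_congr rfl fun f hf => ?_
        rw [measure_pi_bernoulli_edgeEvent q hq (disjoint_treeEdges_edgeBoundary f),
          card_treeEdges hv hf, card_edgeBoundary]
    _ ≤ _ := by
        rw [sum_const, nsmul_eq_mul]
        gcongr
        exact_mod_cast card_parentMaps_le hv

end ParentMap

lemma sum_filter_card_eq_sum_choose {V M : Type*} [Fintype V] [AddCommMonoid M] (P : ℕ → Prop)
    [DecidablePred P] (g : ℕ → M) :
    ∑ S ∈ (univ : Finset (Finset V)).filter (fun S => P #S), g #S =
      ∑ k ∈ (range (Fintype.card V + 1)).filter P, (Fintype.card V).choose k • g k := by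
  rw [sum_filter, sum_filter, ← powerset_univ,
    sum_powerset_apply_card fun k => if P k then g k else 0, card_univ]
  exact sum_congr rfl fun k _ => by split_ifs <;> simp

section ConfGraph

variable {n : ℕ}

lemma confGraph_preimage_subset (a b : ℝ) :
    confGraph n ⁻¹' {G : SimpleGraph (Fin n) | ∃ v : Fin n,
        a ≤ ((G.connectedComponentMk v).supp.ncard : ℝ) ∧
          ((G.connectedComponentMk v).supp.ncard : ℝ) ≤ b} ⊆
      ⋃ v, ⋃ S ∈ (univ : Finset (Finset (Fin n))).filter
          (fun S => v ∈ S ∧ a ≤ (#S : ℝ) ∧ (#S : ℝ) ≤ b),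
        ⋃ f ∈ parentMaps S v, edgeEvent (treeEdges f) (edgeBoundary S) := by
  rintro ω ⟨v, hab⟩
  set G := confGraph n ω
  set S := (G.connectedComponentMk v).supp.toFinset
  have hS : ∀ x, x ∈ S ↔ G.Reachable v x := fun x => by
    rw [Set.mem_toFinset, SimpleGraph.ConnectedComponent.mem_supp_iff,
      SimpleGraph.ConnectedComponent.eq, SimpleGraph.reachable_comm]
  rw [Set.ncard_eq_toFinset_card'] at hab
  obtain ⟨f, hf, hadj⟩ := G.exists_mem_parentMaps_adj hS
  simp only [Set.mem_iUnion]
  refine ⟨v, S, mem_filter.mpr ⟨mem_univ _, (hS v).mpr .rfl, hab⟩, f, hf, ?_, ?_⟩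
  · intro e he
    obtain ⟨x, -, rfl⟩ := mem_image.mp he
    exact (hadj x).2
  · intro e he
    obtain ⟨x, hx, y, hy, rfl⟩ := mem_edgeBoundary.mp he
    by_contra hω
    have hxy : G.Adj x y := ⟨fun h => hy (h ▸ hx), Bool.not_eq_false _ ▸ hω⟩
    exact hy ((hS y).mpr (((hS x).mp hx).trans hxy.reachable))

lemma measure_confGraph_preimage_le (q : ℝ≥0) (hq : q ≤ 1) (a b : ℝ) :
    Measure.pi (fun _ : Sym2 (Fin n) => (PMF.bernoulli q hq).toMeasure)
        (confGraph n ⁻¹' {G : SimpleGraph (Fin n) | ∃ v : Fin n,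
          a ≤ ((G.connectedComponentMk v).supp.ncard : ℝ) ∧
            ((G.connectedComponentMk v).supp.ncard : ℝ) ≤ b}) ≤
      n * ∑ k ∈ (range (n + 1)).filter (fun k : ℕ => a ≤ (k : ℝ) ∧ (k : ℝ) ≤ b),
        ((n.choose k * k ^ (k - 1) : ℕ) : ℝ≥0∞) *
          ((q : ℝ≥0∞) ^ (k - 1) * (1 - (q : ℝ≥0∞)) ^ (k * (n - k))) := by
  set μ := Measure.pi fun _ : Sym2 (Fin n) => (PMF.bernoulli q hq).toMeasure
  set g : ℕ → ℝ≥0∞ := fun k =>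
    ((k ^ (k - 1) : ℕ) : ℝ≥0∞) * ((q : ℝ≥0∞) ^ (k - 1) * (1 - (q : ℝ≥0∞)) ^ (k * (n - k)))
  calc _ ≤ ∑ v : Fin n, ∑ S ∈ (univ : Finset (Finset (Fin n))).filter
          (fun S => v ∈ S ∧ a ≤ (#S : ℝ) ∧ (#S : ℝ) ≤ b),
          μ (⋃ f ∈ parentMaps S v, edgeEvent (treeEdges f) (edgeBoundary S)) :=
        (measure_mono (confGraph_preimage_subset a b)).trans <|
          (measure_iUnion_fintype_le _ _).trans <|
            sum_le_sum fun v _ => measure_biUnion_finset_le _ _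
    _ ≤ ∑ _v : Fin n, ∑ S ∈ (univ : Finset (Finset (Fin n))).filter
          (fun S => a ≤ (#S : ℝ) ∧ (#S : ℝ) ≤ b), g #S := by
        refine sum_le_sum fun v _ => ?_
        refine (sum_le_sum fun S hS => ?_).trans (sum_le_sum_of_subset fun S hS =>
          mem_filter.mpr ⟨mem_univ _, (mem_filter.mp hS).2.2⟩)
        simpa [g, Fintype.card_fin] using
          measure_biUnion_parentMaps_le q hq (mem_filter.mp hS).2.1
    _ = _ := by
        rw [sum_const, card_univ, Fintype.card_fin, nsmul_eq_mul, sum_filter_card_eq_sum_choose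
          (fun k => a ≤ (k : ℝ) ∧ (k : ℝ) ≤ b), Fintype.card_fin]
        simp only [g, nsmul_eq_mul, Nat.cast_mul, mul_assoc]

end ConfGraph

noncomputable def erRate (lam : ℝ) : ℝ := lam - 1 - Real.log lam

lemma erRate_pos {lam : ℝ} (hlam : 1 < lam) : 0 < erRate lam := by
  have := Real.log_lt_sub_one_of_pos (by linarith) hlam.ne'
  rw [erRate]
  linarith

/-- `C(n,k) k^(k-1)` bounds the number of `k`-sets containing a given root together with a parent
map on them, and `p^(k-1) e^(-p k(n-k))` the probability that its `k - 1` edges are present and no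
edge leaves the set. -/
noncomputable def rootedTreeWeight (n : ℕ) (p : ℝ) (k : ℕ) : ℝ :=
  (n.choose k * k ^ (k - 1) : ℕ) * (p ^ (k - 1) * exp (-p) ^ (k * (n - k)))

/-- `C(n,k) ≤ n^k/k!`, `k^k ≤ e^k k!` and `1 - p ≤ e^(-p)` give the bound
`n exp (-(λ - 1 - log λ) k + λ k²/n)`, and `k ≤ c n` makes the correction `λ k²/n` at most half
of the rate. -/
lemma rootedTreeWeight_le {lam : ℝ} (hlam : 1 ≤ lam) {n k : ℕ} (hk : 1 ≤ k) (hkn : k ≤ n)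
    (hkc : (k : ℝ) ≤ erRate lam / (2 * lam) * n) :
    rootedTreeWeight n (lam / n) k ≤ n * exp (-(erRate lam / 2 * k)) := by
  have hn : (0 : ℝ) < n := by exact_mod_cast hk.trans hkn
  have hlam0 : 0 < lam := by linarith
  have hk0 : (0 : ℝ) < k := by exact_mod_cast hk
  have hchoose : (n.choose k : ℝ) ≤ (n : ℝ) ^ k / k ! := Nat.choose_le_pow_div k n
  have hkpow : (k : ℝ) ^ (k - 1) ≤ exp k * k ! := by
    have := Real.pow_div_factorial_le_exp (k : ℝ) hk0.le k
    rw [div_le_iff₀ (by positivity)] at this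
    exact (pow_le_pow_right₀ (by exact_mod_cast hk) (Nat.sub_le k 1)).trans this
  have hsurvive : exp (-(lam / n)) ^ (k * (n - k)) ≤ exp (-(lam * k) + erRate lam / 2 * k) := by
    rw [← Real.exp_nat_mul, Real.exp_le_exp, Nat.cast_mul, Nat.cast_sub hkn]
    have hquad : lam * k * k / n ≤ erRate lam / 2 * k := by
      rw [div_le_iff₀ hn]
      calc lam * k * k ≤ lam * k * (erRate lam / (2 * lam) * n) := by gcongr
        _ = erRate lam / 2 * k * n := by field_simp
    rw [show (k : ℝ) * (n - k) * -(lam / n) = -(lam * k) + lam * k * k / n by field_simp; ring]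
    linarith
  have hpowlam : (n : ℝ) ^ k * (lam / n) ^ (k - 1) = n * lam ^ (k - 1) := by
    obtain ⟨j, rfl⟩ : ∃ j, k = j + 1 := ⟨k - 1, by omega⟩
    rw [Nat.add_sub_cancel, div_pow, pow_succ]
    field_simp
  have hlampow : lam ^ (k - 1) ≤ exp (Real.log lam * k) := by
    rw [Real.exp_mul, Real.exp_log hlam0, Real.rpow_natCast]
    exact pow_le_pow_right₀ hlam (Nat.sub_le k 1)
  calc rootedTreeWeight n (lam / n) k
      ≤ (n ^ k / k !) * (exp k * k !) * ((lam / n) ^ (k - 1) *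
          exp (-(lam * k) + erRate lam / 2 * k)) := by
        rw [rootedTreeWeight]
        push_cast
        gcongr
    _ = (n ^ k * (lam / n) ^ (k - 1)) * (exp k * exp (-(lam * k) + erRate lam / 2 * k)) := by
        field_simp
    _ = n * lam ^ (k - 1) * exp (k + (-(lam * k) + erRate lam / 2 * k)) := by
        rw [hpowlam]
        simp only [Real.exp_add]
    _ ≤ n * exp (Real.log lam * k) * exp (k + (-(lam * k) + erRate lam / 2 * k)) := by
        gcongr
    _ = n * exp (-(erRate lam / 2 * k)) := by
        rw [mul_assoc, ← Real.exp_add, erRate]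
        ring_nf

lemma exp_neg_mul_le_inv_pow {δ x k : ℝ} (hδ : 0 < δ) (hx : 0 < x) {m : ℕ}
    (hk : m / δ * Real.log x ≤ k) : exp (-(δ * k)) ≤ (x ^ m)⁻¹ := by
  rw [Real.exp_neg]
  refine inv_anti₀ (by positivity) ?_
  calc x ^ m = exp (m * Real.log x) := by rw [Real.exp_nat_mul, Real.exp_log hx]
    _ ≤ exp (δ * k) := by
        rw [Real.exp_le_exp]
        rwa [div_mul_eq_mul_div, div_le_iff₀' hδ] at hk

lemma sum_rootedTreeWeight_le {lam : ℝ} (hlam : 1 < lam) {n : ℕ} (hn : 2 ≤ n) :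
    (n : ℝ) * ∑ k ∈ (range (n + 1)).filter (fun k : ℕ =>
        206 / erRate lam * Real.log n ≤ (k : ℝ) ∧ (k : ℝ) ≤ erRate lam / (2 * lam) * n),
      rootedTreeWeight n (lam / n) k ≤ 2 / (n : ℝ) ^ 100 := by
  have hn0 : (0 : ℝ) < n := by positivity
  have hrate := erRate_pos hlam
  -- `206 / erRate λ = 103 / δ` with `δ = erRate λ / 2`, so each term is at most `n · n⁻¹⁰³`
  have hterm : ∀ k ∈ (range (n + 1)).filter (fun k : ℕ =>
      206 / erRate lam * Real.log n ≤ (k : ℝ) ∧ (k : ℝ) ≤ erRate lam / (2 * lam) * n),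
      rootedTreeWeight n (lam / n) k ≤ n * ((n : ℝ) ^ 103)⁻¹ := by
    intro k hk
    obtain ⟨hkn, hCk, hkc⟩ := mem_filter.mp hk
    have hk : (0 : ℝ) < k :=
      (mul_pos (by positivity) (Real.log_pos (by exact_mod_cast hn))).trans_le hCk
    refine (rootedTreeWeight_le hlam.le (by exact_mod_cast hk) (by simpa [Nat.lt_succ_iff]
      using hkn) hkc).trans (mul_le_mul_of_nonneg_left ?_ hn0.le)
    exact exp_neg_mul_le_inv_pow (by positivity) hn0 (by convert hCk using 2; ring)
  calc _ ≤ (n : ℝ) * ((n + 1) * (n * ((n : ℝ) ^ 103)⁻¹)) := by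
        gcongr
        refine (sum_le_card_nsmul _ _ _ hterm).trans ?_
        rw [nsmul_eq_mul]
        gcongr
        exact_mod_cast (card_filter_le _ _).trans (card_range _).le
    _ ≤ 2 / (n : ℝ) ^ 100 := by
        rw [show (103 : ℕ) = 3 + 100 from rfl, pow_add, mul_inv, div_eq_mul_inv]
        have hn1 : (1 : ℝ) ≤ n := by exact_mod_cast (by omega : 1 ≤ n)
        calc _ = (n + 1) / n * (((n : ℝ) ^ 100)⁻¹) := by field_simp
          _ ≤ 2 * ((n : ℝ) ^ 100)⁻¹ := by
            gcongr
            rw [div_le_iff₀ hn0]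
            linarith

lemma sum_pow_mul_one_sub_pow_le_ofReal_exp {ι : Type*} {p : ℝ} (hp : 0 ≤ p) (s : Finset ι)
    (c i j : ι → ℕ) :
    ∑ k ∈ s, (c k : ℝ≥0∞) * (((min p.toNNReal 1 : ℝ≥0) : ℝ≥0∞) ^ i k *
        (1 - ((min p.toNNReal 1 : ℝ≥0) : ℝ≥0∞)) ^ j k) ≤
      ENNReal.ofReal (∑ k ∈ s, (c k : ℝ) * (p ^ i k * exp (-p) ^ j k)) := by
  have hq : ((min p.toNNReal 1 : ℝ≥0) : ℝ≥0∞) ≤ ENNReal.ofReal p :=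
    ENNReal.coe_le_coe.mpr (min_le_left _ _)
  have h1q : 1 - ((min p.toNNReal 1 : ℝ≥0) : ℝ≥0∞) ≤ ENNReal.ofReal (exp (-p)) := by
    rw [min_comm, ENNReal.coe_min, ENNReal.coe_one, tsub_min, ← ENNReal.ofReal_one]
    exact (ENNReal.ofReal_sub 1 hp).symm.trans_le
      (ENNReal.ofReal_le_ofReal (by linarith [Real.add_one_le_exp (-p)]))
  rw [ENNReal.ofReal_sum_of_nonneg fun k _ => by positivity]
  gcongr with k
  rw [ENNReal.ofReal_mul (by positivity), ENNReal.ofReal_natCast, ENNReal.ofReal_mul (by positivity),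
    ENNReal.ofReal_pow hp, ENNReal.ofReal_pow (by positivity)]
  gcongr

/-- No component of `G(n, λ/n)` has size in `[C log n, c n]`, except with probability
`O(n⁻¹⁰⁰)`. -/
theorem er_no_middle_component (lam : ℝ) (hlam : 1 < lam) :
    ∃ c C K : ℝ, 0 < c ∧ 0 < C ∧ 0 < K ∧ ∀ n : ℕ, 2 ≤ n →
      erMeasure n (lam / n)
          {G : SimpleGraph (Fin n) | ∃ v : Fin n,
            C * Real.log n ≤ ((G.connectedComponentMk v).supp.ncard : ℝ) ∧
              ((G.connectedComponentMk v).supp.ncard : ℝ) ≤ c * n} ≤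
        ENNReal.ofReal (K / (n : ℝ) ^ 100) := by
  have hrate := erRate_pos hlam
  refine ⟨erRate lam / (2 * lam), 206 / erRate lam, 2, by positivity, by positivity, two_pos,
    fun n hn => ?_⟩
  rw [erMeasure, Measure.map_apply (measurable_of_countable _) MeasurableSpace.measurableSet_top]
  refine (measure_confGraph_preimage_le _ _ _ _).trans <|
    (mul_le_mul_right (sum_pow_mul_one_sub_pow_le_ofReal_exp (by positivity) _ _ _ _) _).trans ?_
  rw [← ENNReal.ofReal_natCast, ← ENNReal.ofReal_mul (by positivity)]
  exact ENNReal.ofReal_le_ofReal (sum_rootedTreeWeight_le hlam hn)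
end

section
/- Let N ≥ 1 be an integer, let p ∈ (0, 1/2], let t ≥ 0 and set q = e^{−t}. Let ν be the product probability measure on {0,1}^N whose every coordinate equals 1 with probability p + q(1−p), and let π_p be the product measure on {0,1}^N whose every coordinate equals 1 with probability p. Then the total variation distance satisfies d_TV(ν, π_p) ≥ 1 − 2·exp(−q²·N/18). -/
/-- The product measure on `{0,1}^N` with coordinate-`i` success probability `θ i`, as a mass
function. -/
noncomputable def prodMass {N : ℕ} (θ : Fin N → ℝ) (ω : Fin N → Bool) : ℝ :=
  ∏ i, if ω i then θ i else 1 - θ i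

/-- Total variation distance between two mass functions on `{0,1}^N`. -/
noncomputable def tvDist {N : ℕ} (μ ν : (Fin N → Bool) → ℝ) : ℝ :=
  1 / 2 * ∑ ω : Fin N → Bool, |μ ω - ν ω|

/-!
Threshold the number of ones at `N (p + ε)` with `ε = q (1 - p) / 2`, half the gap between the
two coordinate densities `p + q (1 - p)` and `p`. Exponential Chernoff bounds, with Hoeffding's
lemma for a single Bernoulli coordinate, show that `π_p` gives this event, and `ν` its complement,
mass at most `exp (-2 ε² N)`. Hence `d_TV(ν, π_p) ≥ 1 - 2 exp (-2 ε² N)`, and `2 ε² ≥ q² / 8` as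
`p ≤ 1 / 2`.
-/

open Real MeasureTheory ProbabilityTheory Finset

theorem bernoulli_mgf_le {a : ℝ} (ha0 : 0 ≤ a) (ha1 : a ≤ 1) (l : ℝ) :
    1 - a + a * exp l ≤ exp (a * l + l ^ 2 / 8) := by
  let X : Bool → ℝ := fun b => if b then 1 else 0
  let μ : Measure Bool := Ber(true, false, ⟨a, ha0, ha1⟩)
  have hmean : μ[X] = a := by simp [μ, X, integral_bernoulliMeasure]
  have hoeffding : a * exp (l * (1 - a)) + (1 - a) * exp (-(l * a)) ≤ exp (l ^ 2 / 8) := by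
    convert (hasSubgaussianMGF_of_mem_Icc (μ := μ) (a := 0) (b := 1)
      (Measurable.of_discrete (f := X)).aemeasurable
      (ae_of_all _ fun b => by cases b <;> simp [X])).mgf_le l using 1
    · simp [mgf, hmean, μ, X, integral_bernoulliMeasure]
    · norm_num
      ring_nf
  calc 1 - a + a * exp l
      = exp (a * l) * (a * exp (l * (1 - a)) + (1 - a) * exp (-(l * a))) := by
        have h1 : exp (a * l) * exp (l * (1 - a)) = exp l := by rw [← exp_add]; ring_nf
        have h2 : exp (a * l) * exp (-(l * a)) = 1 := by rw [← exp_add, ← exp_zero]; ring_nf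
        linear_combination -a * h1 - (1 - a) * h2
    _ ≤ exp (a * l) * exp (l ^ 2 / 8) := by gcongr
    _ = exp (a * l + l ^ 2 / 8) := (exp_add _ _).symm

theorem sum_sub_sum_le_tvDist {N : ℕ} {μ ν : (Fin N → Bool) → ℝ} (hμν : ∑ ω, μ ω = ∑ ω, ν ω)
    (A : Finset (Fin N → Bool)) : ∑ ω ∈ A, μ ω - ∑ ω ∈ A, ν ω ≤ tvDist μ ν := by
  have hcompl : ∑ ω ∈ Aᶜ, (μ ω - ν ω) = -∑ ω ∈ A, (μ ω - ν ω) := by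
    have htotal : ∑ ω, (μ ω - ν ω) = 0 := by rw [sum_sub_distrib, hμν, sub_self]
    linarith [sum_add_sum_compl A fun ω => μ ω - ν ω]
  have hA : ∑ ω ∈ A, (μ ω - ν ω) ≤ ∑ ω ∈ A, |μ ω - ν ω| := sum_le_sum fun ω _ => le_abs_self _
  have hAc : ∑ ω ∈ Aᶜ, -(μ ω - ν ω) ≤ ∑ ω ∈ Aᶜ, |μ ω - ν ω| :=
    sum_le_sum fun ω _ => neg_le_abs _
  rw [sum_neg_distrib, hcompl, neg_neg] at hAc
  rw [tvDist, ← sum_add_sum_compl A, ← sum_sub_distrib]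
  linarith

noncomputable def numOnes {N : ℕ} (ω : Fin N → Bool) : ℝ :=
  ∑ i, if ω i then 1 else 0

section ProdMass

variable {N : ℕ}

theorem prodMass_nonneg {θ : Fin N → ℝ} (hθ0 : ∀ i, 0 ≤ θ i) (hθ1 : ∀ i, θ i ≤ 1)
    (ω : Fin N → Bool) : 0 ≤ prodMass θ ω :=
  prod_nonneg fun i _ => by
    cases ω i
    · simpa using hθ1 i
    · simpa using hθ0 i

theorem sum_prodMass_mul_exp_numOnes (θ : Fin N → ℝ) (l : ℝ) :
    ∑ ω, prodMass θ ω * exp (l * numOnes ω) = ∏ i, (1 - θ i + θ i * exp l) := by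
  have hsplit (ω : Fin N → Bool) : prodMass θ ω * exp (l * numOnes ω)
      = ∏ i, if ω i then θ i * exp l else 1 - θ i := by
    rw [prodMass, numOnes, mul_sum, exp_sum, ← prod_mul_distrib]
    refine prod_congr rfl fun i _ => ?_
    cases ω i <;> simp
  simp_rw [hsplit, ← Fintype.prod_sum fun i (b : Bool) => if b then θ i * exp l else 1 - θ i,
    Fintype.sum_bool, if_true, Bool.false_eq_true, if_false, add_comm]

theorem sum_prodMass (θ : Fin N → ℝ) : ∑ ω, prodMass θ ω = 1 := by
  simpa using sum_prodMass_mul_exp_numOnes θ 0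

theorem sum_prodMass_le_exp_of_forall_le {c : ℝ} (hc0 : 0 ≤ c) (hc1 : c ≤ 1) {l d : ℝ}
    {A : Finset (Fin N → Bool)} (hA : ∀ ω ∈ A, l * (N * (c + d)) ≤ l * numOnes ω) :
    ∑ ω ∈ A, prodMass (fun _ => c) ω ≤ exp (N * (l ^ 2 / 8 - l * d)) := by
  have hnonneg := prodMass_nonneg (N := N) (fun _ => hc0) (fun _ => hc1)
  calc ∑ ω ∈ A, prodMass (fun _ => c) ω
      ≤ ∑ ω ∈ A, prodMass (fun _ => c) ω * exp (l * numOnes ω - l * (N * (c + d))) :=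
        sum_le_sum fun ω hω => le_mul_of_one_le_right (hnonneg ω)
          (one_le_exp (sub_nonneg.mpr (hA ω hω)))
    _ ≤ ∑ ω, prodMass (fun _ => c) ω * exp (l * numOnes ω - l * (N * (c + d))) :=
        sum_le_sum_of_subset_of_nonneg (subset_univ A) fun ω _ _ =>
          mul_nonneg (hnonneg ω) (exp_pos _).le
    _ = exp (-(l * (N * (c + d)))) * (1 - c + c * exp l) ^ N := by
        simp_rw [exp_sub, mul_div_assoc', ← sum_div, sum_prodMass_mul_exp_numOnes, prod_const,
          card_univ, Fintype.card_fin, exp_neg]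
        ring
    _ ≤ exp (-(l * (N * (c + d)))) * exp (c * l + l ^ 2 / 8) ^ N := by
        gcongr
        exact bernoulli_mgf_le hc0 hc1 l
    _ = exp (N * (l ^ 2 / 8 - l * d)) := by
        rw [← exp_nat_mul, ← exp_add]
        ring_nf

theorem sum_prodMass_upper_tail_le {c s : ℝ} (hc0 : 0 ≤ c) (hc1 : c ≤ 1) (hs : 0 ≤ s) :
    ∑ ω : Fin N → Bool with N * (c + s) ≤ numOnes ω, prodMass (fun _ => c) ω ≤
      exp (-(2 * s ^ 2 * N)) := by
  convert sum_prodMass_le_exp_of_forall_le (l := 4 * s) hc0 hc1 fun ω hω => ?_ using 2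
  · ring
  · exact mul_le_mul_of_nonneg_left (mem_filter.mp hω).2 (by positivity)

theorem sum_prodMass_lower_tail_le {c s : ℝ} (hc0 : 0 ≤ c) (hc1 : c ≤ 1) (hs : 0 ≤ s) :
    ∑ ω : Fin N → Bool with numOnes ω < N * (c - s), prodMass (fun _ => c) ω ≤
      exp (-(2 * s ^ 2 * N)) := by
  convert sum_prodMass_le_exp_of_forall_le (l := -(4 * s)) (d := -s) hc0 hc1 fun ω hω => ?_ using 2
  · ring
  · have := (mem_filter.mp hω).2
    rw [← sub_eq_add_neg]
    nlinarith

end ProdMass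

theorem environment_mixing_lower_general (N : ℕ) (p : ℝ) (hp0 : 0 < p)
    (hp1 : p ≤ 1 / 2) (t : ℝ) (ht : 0 ≤ t) :
    1 - 2 * Real.exp (-(Real.exp (-t) ^ 2 * N / 18)) ≤
      tvDist (prodMass fun _ : Fin N => p + Real.exp (-t) * (1 - p))
        (prodMass fun _ => p) := by
  set q := exp (-t)
  have hq0 : 0 < q := exp_pos _
  have hq1 : q ≤ 1 := exp_le_one_iff.mpr (neg_nonpos.mpr ht)
  set r := p + q * (1 - p)
  set ε := q * (1 - p) / 2 with hε_def
  have hε : 0 ≤ ε := div_nonneg (mul_nonneg hq0.le (by linarith)) zero_le_two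
  have hr : r - ε = p + ε := by ring
  set A := univ.filter fun ω : Fin N → Bool => N * (p + ε) ≤ numOnes ω
  have hπ : ∑ ω ∈ A, prodMass (fun _ => p) ω ≤ exp (-(2 * ε ^ 2 * N)) :=
    sum_prodMass_upper_tail_le hp0.le (by linarith) hε
  have hν : ∑ ω ∈ Aᶜ, prodMass (fun _ => r) ω ≤ exp (-(2 * ε ^ 2 * N)) := by
    simp_rw [A, compl_filter, not_le, ← hr]
    exact sum_prodMass_lower_tail_le (by nlinarith) (by nlinarith) hε
  have hexp : exp (-(2 * ε ^ 2 * N)) ≤ exp (-(q ^ 2 * N / 18)) := by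
    have hp : 1 / 4 ≤ (1 - p) ^ 2 := by nlinarith
    have hsq : q ^ 2 / 18 ≤ 2 * ε ^ 2 := by
      rw [hε_def]
      nlinarith [mul_le_mul_of_nonneg_left hp (sq_nonneg q)]
    gcongr
    linarith [mul_le_mul_of_nonneg_right hsq N.cast_nonneg]
  have htv := sum_sub_sum_le_tvDist
    ((sum_prodMass fun _ => r).trans (sum_prodMass fun _ => p).symm) A
  have hsplit := sum_add_sum_compl A (prodMass fun _ => r)
  rw [sum_prodMass] at hsplit
  linarith

/-- Lower bound for the environment chain started from the all-ones configuration: with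
`q = e^{-t}`, the total variation distance from stationarity is at least
`1 - 2 exp(-q² N / 18)`. -/
theorem environment_mixing_lower (N : ℕ) (hN : 1 ≤ N) (p : ℝ) (hp0 : 0 < p)
    (hp1 : p ≤ 1 / 2) (t : ℝ) (ht : 0 ≤ t) :
    1 - 2 * Real.exp (-(Real.exp (-t) ^ 2 * N / 18)) ≤
      tvDist (prodMass fun _ : Fin N => p + Real.exp (-t) * (1 - p))
        (prodMass fun _ => p) :=
  environment_mixing_lower_general N p hp0 hp1 t ht
end
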